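/- Let A ∈ ℝ^{n×n} be symmetric positive semidefinite and S ⊆ [n]. Define the Nyström approximation A⟨S⟩ := A_{:,S} (A_{S,S})† A_{S,:} and the orthogonal projector P := I − A^{1/2} e_S (e_Sᵀ A e_S)† e_Sᵀ A^{1/2} onto null(e_Sᵀ A^{1/2}), where e_S ∈ ℝ^{n×|S|} has as columns the standard basis vectors indexed by S. Then the residual matrix satisfies A − A⟨S⟩ = A^{1/2} P A^{1/2}. -/

import Mathlib

/-!
Selecting the columns indexed by `S` is right multiplication by `e_S`, so `A_{:,S} = A e_S`,
`A_{S,:} = e_Sᵀ A` and `A_{S,S} = e_Sᵀ A e_S`; by uniqueness of the Moore–Penrose inverse the two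
pseudoinverses coincide. Writing `A = A^{1/2} A^{1/2}`, both sides then expand to
`A − A e_S (A_{S,S})† e_Sᵀ A`.
-/

open Matrix

/-- `Mp` is the Moore–Penrose pseudoinverse of `M` (the four Penrose conditions,
which characterize it uniquely). -/
def IsMoorePenrose {k l : Type*} [Fintype k] [Fintype l]
    (M : Matrix k l ℝ) (Mp : Matrix l k ℝ) : Prop :=
  M * Mp * M = M ∧ Mp * M * Mp = Mp ∧ (M * Mp)ᵀ = M * Mp ∧ (Mp * M)ᵀ = Mp * M

open scoped ComplexOrder in
/-- The square root of a positive semidefinite matrix, as `Matrix.PosSemidef.sqrt` was defined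
in Mathlib of December 2024 (since removed from Mathlib). -/
noncomputable def Matrix.PosSemidef.sqrt {n 𝕜 : Type*} [Fintype n] [RCLike 𝕜] [DecidableEq n]
    {A : Matrix n n 𝕜} (hA : A.PosSemidef) : Matrix n n 𝕜 :=
  hA.1.eigenvectorUnitary.1 * diagonal ((↑) ∘ (√·) ∘ hA.1.eigenvalues) *
    (star hA.1.eigenvectorUnitary : Matrix n n 𝕜)

open scoped ComplexOrder in
theorem Matrix.PosSemidef.sqrt_mul_self {n 𝕜 : Type*} [Fintype n] [RCLike 𝕜] [DecidableEq n]
    {A : Matrix n n 𝕜} (hA : A.PosSemidef) : hA.sqrt * hA.sqrt = A := by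
  set U : Matrix n n 𝕜 := hA.1.eigenvectorUnitary.1
  set D : Matrix n n 𝕜 := diagonal ((↑) ∘ (√·) ∘ hA.1.eigenvalues)
  have hU : star U * U = 1 := Unitary.coe_star_mul_self _
  have hD : D * D = diagonal ((↑) ∘ hA.1.eigenvalues) := by
    rw [diagonal_mul_diagonal]
    congr 1
    ext i
    simp [← RCLike.ofReal_mul, Real.mul_self_sqrt (hA.eigenvalues_nonneg i)]
  calc hA.sqrt * hA.sqrt = U * D * (star U * U) * D * star U := by
        simp only [Matrix.PosSemidef.sqrt, U, D, Matrix.mul_assoc]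
    _ = A := by
        rw [hU, Matrix.mul_one, Matrix.mul_assoc U, hD]
        exact hA.1.spectral_theorem.symm

namespace IsMoorePenrose

variable {k l : Type*} [Fintype k] [Fintype l] {M : Matrix k l ℝ} {P Q : Matrix l k ℝ}

theorem transpose (h : IsMoorePenrose M P) : IsMoorePenrose Mᵀ Pᵀ := by
  obtain ⟨h₁, h₂, h₃, h₄⟩ := h
  refine ⟨?_, ?_, ?_, ?_⟩
  · rw [← transpose_mul, ← transpose_mul, ← Matrix.mul_assoc, h₁]
  · rw [← transpose_mul, ← transpose_mul, ← Matrix.mul_assoc, h₂]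
  · simpa only [transpose_mul, transpose_transpose] using h₄.symm
  · simpa only [transpose_mul, transpose_transpose] using h₃.symm

theorem mul_eq_mul (hP : IsMoorePenrose M P) (hQ : IsMoorePenrose M Q) : P * M = Q * M :=
  calc P * M = (P * (M * Q * M))ᵀ := by rw [hQ.1, hP.2.2.2]
    _ = (Q * M)ᵀ * (P * M)ᵀ := by rw [← transpose_mul]; simp only [Matrix.mul_assoc]
    _ = Q * M := by rw [hQ.2.2.2, hP.2.2.2, Matrix.mul_assoc Q, ← Matrix.mul_assoc M, hP.1]

theorem unique (hP : IsMoorePenrose M P) (hQ : IsMoorePenrose M Q) : P = Q := by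
  have hMP : M * P = M * Q := by
    simpa only [transpose_mul, transpose_transpose] using
      congrArg Matrix.transpose (hP.transpose.mul_eq_mul hQ.transpose)
  calc P = P * M * P := hP.2.1.symm
    _ = Q * M * Q := by rw [hP.mul_eq_mul hQ, Matrix.mul_assoc, hMP, ← Matrix.mul_assoc]
    _ = Q := hQ.2.1

end IsMoorePenrose

section Selection

variable {l m s α : Type*} [Fintype m] [DecidableEq m] [NonAssocSemiring α] (f : s → m)

theorem Matrix.mul_one_submatrix_id (A : Matrix l m α) :
    A * (1 : Matrix m m α).submatrix id f = A.submatrix id f := by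
  simpa using mul_submatrix_one (Equiv.refl m) f A

theorem Matrix.transpose_one_submatrix_id_mul (A : Matrix m l α) :
    ((1 : Matrix m m α).submatrix id f)ᵀ * A = A.submatrix f id := by
  simpa [transpose_submatrix] using one_submatrix_mul f (Equiv.refl m) A

end Selection

/-- Nyström residual as a projected matrix. For psd `A` and
`S ⊆ [n]`, with `A⟨S⟩ = A_{:,S}(A_{S,S})† A_{S,:}` and the orthogonal projector
`P = I − A^{1/2} e_S (e_Sᵀ A e_S)† e_Sᵀ A^{1/2}` onto `null(e_Sᵀ A^{1/2})`, the
residual satisfies `A − A⟨S⟩ = A^{1/2} P A^{1/2}`. -/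
theorem stmt_11 {n : ℕ}
    (A : Matrix (Fin n) (Fin n) ℝ) (hA : A.PosSemidef)
    (S : Finset (Fin n))
    -- `sq = A^{1/2}`, the psd square root of `A`
    (sq : Matrix (Fin n) (Fin n) ℝ) (hsq : sq = hA.sqrt)
    -- `eS` has as columns the standard basis vectors indexed by `S`
    (eS : Matrix (Fin n) {j // j ∈ S} ℝ)
    (heS : eS = Matrix.of fun i j => if i = j.val then 1 else 0)
    -- `W1 = (A_{S,S})†` and `W2 = (e_Sᵀ A e_S)†`
    (W1 : Matrix {j // j ∈ S} {j // j ∈ S} ℝ)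
    (hW1 : IsMoorePenrose (A.submatrix (fun j : {j // j ∈ S} => (j : Fin n))
      (fun j : {j // j ∈ S} => (j : Fin n))) W1)
    (W2 : Matrix {j // j ∈ S} {j // j ∈ S} ℝ)
    (hW2 : IsMoorePenrose (eSᵀ * A * eS) W2)
    -- the projector `P = I − A^{1/2} e_S (e_Sᵀ A e_S)† e_Sᵀ A^{1/2}`
    (P : Matrix (Fin n) (Fin n) ℝ)
    (hP : P = 1 - sq * eS * W2 * eSᵀ * sq) :
    A - A.submatrix id (fun j : {j // j ∈ S} => (j : Fin n)) * W1 *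
        A.submatrix (fun j : {j // j ∈ S} => (j : Fin n)) id =
      sq * P * sq := by
  obtain rfl : eS = (1 : Matrix (Fin n) (Fin n) ℝ).submatrix id Subtype.val :=
    heS.trans (by ext; simp [one_apply])
  have hsqA : sq * sq = A := hsq ▸ hA.sqrt_mul_self
  have hW : W1 = W2 := hW1.unique <| by
    simpa only [transpose_one_submatrix_id_mul, mul_one_submatrix_id, submatrix_submatrix,
      Function.comp_id, Function.id_comp] using hW2
  rw [hP, hW, ← mul_one_submatrix_id, ← transpose_one_submatrix_id_mul, ← hsqA]
  simp only [Matrix.mul_sub, Matrix.sub_mul, Matrix.mul_one, Matrix.mul_assoc]
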